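/- For every positive integer k and every positive integer N, there exists a finite simple connected graph G of order n ≥ 2 such that (n − 1) − γ_L^k(G) ≥ N. -/

import Mathlib

open SimpleGraph Finset

/-- `D` is a distance-`k` dominating set of `G`: every vertex outside `D` is within
distance `k` of some vertex of `D`. -/
def IsKDomSet {V : Type*} (G : SimpleGraph V) (k : ℕ) (D : Finset V) : Prop :=
  ∀ u : V, u ∉ D → ∃ w ∈ D, G.dist u w ≤ k

/-- `R` is a distance-`k` resolving set of `G`: any two distinct vertices are
distinguished by the truncated distance `d_k(x,y) = min (d(x,y)) (k+1)` to some vertex of `R`. -/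
def IsKResSet {V : Type*} (G : SimpleGraph V) (k : ℕ) (R : Finset V) : Prop :=
  ∀ x y : V, x ≠ y → ∃ z ∈ R, min (G.dist x z) (k + 1) ≠ min (G.dist y z) (k + 1)

/-- The distance-`k` domination number `γ_k(G)`. -/
noncomputable def kdom {V : Type*} (G : SimpleGraph V) (k : ℕ) : ℕ :=
  sInf {m : ℕ | ∃ D : Finset V, IsKDomSet G k D ∧ D.card = m}

/-- The distance-`k` dimension `dim_k(G)`. -/
noncomputable def kdim {V : Type*} (G : SimpleGraph V) (k : ℕ) : ℕ :=
  sInf {m : ℕ | ∃ R : Finset V, IsKResSet G k R ∧ R.card = m}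

/-- The distance-`k` location-domination number `γ_L^k(G)`. -/
noncomputable def kld {V : Type*} (G : SimpleGraph V) (k : ℕ) : ℕ :=
  sInf {m : ℕ | ∃ S : Finset V, IsKDomSet G k S ∧ IsKResSet G k S ∧ S.card = m}

/-!
In the intersection graph on the nonempty subsets of an `m`-set, which has `2 ^ m - 1` vertices,
a set `A` is at distance at most `1` from `{a}` when `a ∈ A` and at distance at least `2`
otherwise. So the `m` singletons dominate, and the truncated distances to them recover `A`: they
form a distance-`1`, hence distance-`k`, locating-dominating set. Take `m = N + 2`.
-/

namespace SimpleGraph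

variable {V W : Type*} {G : SimpleGraph V} {G' : SimpleGraph W}

lemma Hom.dist_le (f : G →g G') {u v : V} (h : G.Reachable u v) :
    G'.dist (f u) (f v) ≤ G.dist u v := by
  obtain ⟨p, hp⟩ := h.exists_walk_length_eq_dist
  calc G'.dist (f u) (f v) ≤ (p.map f).length := SimpleGraph.dist_le _
    _ = G.dist u v := by rw [Walk.length_map, hp]

lemma Iso.dist_eq (e : G ≃g G') (u v : V) : G'.dist (e u) (e v) = G.dist u v := by
  by_cases h : G.Reachable u v
  · refine le_antisymm (e.toHom.dist_le h) ?_
    simpa using e.symm.toHom.dist_le (e.reachable_iff.mpr h)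
  · rw [dist_eq_zero_of_not_reachable h, dist_eq_zero_of_not_reachable (mt e.reachable_iff.mp h)]

end SimpleGraph

section LocatingDominating

variable {V W : Type*} {G : SimpleGraph V} {G' : SimpleGraph W} {k l : ℕ}

lemma IsKDomSet.mono {D : Finset V} (hkl : k ≤ l) (h : IsKDomSet G k D) : IsKDomSet G l D :=
  fun u hu => (h u hu).imp fun _ ⟨hw, hd⟩ => ⟨hw, hd.trans hkl⟩

lemma IsKResSet.mono {R : Finset V} (hkl : k ≤ l) (h : IsKResSet G k R) : IsKResSet G l R :=
  fun x y hxy => (h x y hxy).imp fun _ ⟨hz, hd⟩ => ⟨hz, by omega⟩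

lemma IsKDomSet.map_iso {D : Finset V} (e : G ≃g G') (h : IsKDomSet G k D) :
    IsKDomSet G' k (D.map e.toEquiv.toEmbedding) := by
  intro u hu
  obtain ⟨w, hw, hd⟩ := h (e.symm u) fun h' => hu (mem_map.mpr ⟨_, h', e.apply_symm_apply u⟩)
  exact ⟨e w, mem_map_of_mem _ hw, by rwa [← e.apply_symm_apply u, e.dist_eq]⟩

lemma IsKResSet.map_iso {R : Finset V} (e : G ≃g G') (h : IsKResSet G k R) :
    IsKResSet G' k (R.map e.toEquiv.toEmbedding) := by
  intro x y hxy
  obtain ⟨z, hz, hd⟩ := h (e.symm x) (e.symm y) (e.symm.injective.ne hxy)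
  refine ⟨e z, mem_map_of_mem _ hz, ?_⟩
  rwa [← e.apply_symm_apply x, ← e.apply_symm_apply y, e.dist_eq, e.dist_eq]

lemma kld_le_card {S : Finset V} (hD : IsKDomSet G k S) (hR : IsKResSet G k S) :
    kld G k ≤ S.card :=
  Nat.sInf_le ⟨S, hD, hR, rfl⟩

end LocatingDominating

lemma Fintype.card_finset_nonempty (α : Type*) [Fintype α] :
    Fintype.card {A : Finset α // A.Nonempty} = 2 ^ Fintype.card α - 1 := by
  classical
  simp only [Fintype.card_subtype, nonempty_iff_ne_empty, filter_ne' univ ∅,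
    card_erase_of_mem (mem_univ _), card_univ, Fintype.card_finset]

def finsetIntersectionGraph (α : Type*) : SimpleGraph {A : Finset α // A.Nonempty} where
  Adj A B := A ≠ B ∧ ¬Disjoint A.1 B.1
  symm := ⟨fun _ _ h => ⟨h.1.symm, fun h' => h.2 h'.symm⟩⟩
  loopless := ⟨fun _ h => h.1 rfl⟩

namespace finsetIntersectionGraph

variable {α : Type*}

lemma adj_iff {A B : {A : Finset α // A.Nonempty}} :
    (finsetIntersectionGraph α).Adj A B ↔ A ≠ B ∧ ¬Disjoint A.1 B.1 :=
  Iff.rfl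

def singleton (a : α) : {A : Finset α // A.Nonempty} := ⟨{a}, singleton_nonempty a⟩

lemma reachable_of_subset {A B : {A : Finset α // A.Nonempty}} (h : A.1 ⊆ B.1) :
    (finsetIntersectionGraph α).Reachable A B := by
  by_cases hAB : A = B
  · exact hAB ▸ .refl A
  · refine Adj.reachable (adj_iff.mpr ⟨hAB, fun hdisj => ?_⟩)
    exact A.2.ne_empty (disjoint_self_iff_empty _ |>.mp (hdisj.mono_right h))

lemma connected [Nonempty α] : (finsetIntersectionGraph α).Connected := by
  classical
  have : Nonempty {A : Finset α // A.Nonempty} := ⟨singleton (Classical.arbitrary α)⟩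
  refine ⟨fun A B => ?_⟩
  let U : {A : Finset α // A.Nonempty} := ⟨A.1 ∪ B.1, A.2.mono subset_union_left⟩
  exact (reachable_of_subset (B := U) subset_union_left).trans
    (reachable_of_subset subset_union_right).symm

lemma dist_singleton_le_one {A : {A : Finset α // A.Nonempty}} {a : α} (ha : a ∈ A.1) :
    (finsetIntersectionGraph α).dist A (singleton a) ≤ 1 := by
  by_cases h : A = singleton a
  · simp [h]
  · refine (dist_eq_one_iff_adj.mpr (adj_iff.mpr ⟨h, ?_⟩)).le
    exact not_disjoint_iff.mpr ⟨a, ha, mem_singleton_self a⟩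

lemma one_lt_dist_singleton {A : {A : Finset α // A.Nonempty}} {a : α} (ha : a ∉ A.1) :
    1 < (finsetIntersectionGraph α).dist A (singleton a) := by
  have : Nonempty α := ⟨a⟩
  refine connected.one_lt_dist_of_ne_of_not_adj (fun h => ha (h ▸ mem_singleton_self a)) ?_
  exact fun h => (adj_iff.mp h).2 (disjoint_singleton_right.mpr ha)

lemma min_dist_singleton_ne {A B : {A : Finset α // A.Nonempty}} {a : α} (hA : a ∈ A.1)
    (hB : a ∉ B.1) :
    min ((finsetIntersectionGraph α).dist A (singleton a)) 2 ≠
      min ((finsetIntersectionGraph α).dist B (singleton a)) 2 := by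
  have := dist_singleton_le_one hA
  have := one_lt_dist_singleton hB
  omega

variable [Fintype α]

def singletons : Finset {A : Finset α // A.Nonempty} :=
  univ.map ⟨singleton, fun _ _ h => singleton_injective (congrArg Subtype.val h)⟩

lemma card_singletons : (singletons : Finset {A : Finset α // A.Nonempty}).card = Fintype.card α :=
  card_map _

lemma isKDomSet_singletons : IsKDomSet (finsetIntersectionGraph α) 1 singletons := by
  intro A _
  obtain ⟨a, ha⟩ := A.2
  exact ⟨singleton a, mem_map_of_mem _ (mem_univ a), dist_singleton_le_one ha⟩

lemma isKResSet_singletons : IsKResSet (finsetIntersectionGraph α) 1 singletons := by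
  intro A B hAB
  obtain ⟨a, ha⟩ : ∃ a, ¬(a ∈ A.1 ↔ a ∈ B.1) :=
    not_forall.mp (mt Finset.ext (Subtype.coe_injective.ne hAB))
  refine ⟨singleton a, mem_map_of_mem _ (mem_univ a), ?_⟩
  by_cases haA : a ∈ A.1
  · exact min_dist_singleton_ne haA (by tauto)
  · exact (min_dist_singleton_ne (by tauto) haA).symm

end finsetIntersectionGraph

theorem stmt_10_general (k : ℕ) (hk : 1 ≤ k) (N : ℕ) :
    ∃ (n : ℕ) (G : SimpleGraph (Fin n)), 2 ≤ n ∧ G.Connected ∧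
      kld G k + N ≤ n - 1 := by
  let H := finsetIntersectionGraph (Fin (N + 2))
  let e := H.overFinIso rfl
  have hkld : kld (H.overFin rfl) k ≤ N + 2 := by
    have := kld_le_card
      ((finsetIntersectionGraph.isKDomSet_singletons.mono hk).map_iso e)
      ((finsetIntersectionGraph.isKResSet_singletons.mono hk).map_iso e)
    rwa [card_map, finsetIntersectionGraph.card_singletons, Fintype.card_fin] at this
  have hcard : Fintype.card {A : Finset (Fin (N + 2)) // A.Nonempty} = 4 * 2 ^ N - 1 := by
    rw [Fintype.card_finset_nonempty, Fintype.card_fin, pow_add]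
    ring_nf
  have hpow : N < 2 ^ N := N.lt_two_pow_self
  exact ⟨_, H.overFin rfl, by omega, e.connected_iff.mp finsetIntersectionGraph.connected,
    by omega⟩

/-- For every positive integer `k` and every positive integer `N`, there is a finite
simple connected graph `G` of order `n ≥ 2` with `(n - 1) - γ_L^k(G) ≥ N`. -/
theorem stmt_10 (k : ℕ) (hk : 1 ≤ k) (N : ℕ) (hN : 1 ≤ N) :
    ∃ (n : ℕ) (G : SimpleGraph (Fin n)), 2 ≤ n ∧ G.Connected ∧
      kld G k + N ≤ n - 1 :=
  stmt_10_general k hk N
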